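/- arXiv:1410.7626 — 3 statements merged into one kernel-verified Lean document; each statement's English description precedes it below -/
import Mathlib

section
/- Every left-invariant vector field V ∈ 𝔤 satisfies ∇*∇V = −((A²−B²)²/B²)·V. In particular, every left-invariant vector field is a critical point for the energy functional restricted to left-invariant vector fields of the same length. -/
/-!
Both the bracket and the Koszul formula are bilinear, so it suffices to work on the basis.
Writing `a = ε √(A² - B²)` (so that `a² = A² - B²`), the Koszul formula, tested against the
pseudo-orthonormal basis, gives the sixteen vectors `∇_{eᵢ} eⱼ` explicitly. The rough Laplacian
is linear in `V`, and evaluating it on each `eⱼ` with this table gives `-(a⁴ / B²) eⱼ`.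
-/

open Module

section PseudoOrthonormal

variable {ι K M : Type*} [Fintype ι] [DecidableEq ι] [Field K] [AddCommGroup M] [Module K M]
  (e : Basis ι K M) (g : M →ₗ[K] M →ₗ[K] K) {s : ι → K}

theorem apply_basis_eq_mul_repr (hg : ∀ i j, g (e i) (e j) = if i = j then s i else 0)
    (W : M) (k : ι) : g W (e k) = s k * e.repr W k := by
  have h := congrArg (fun v => g v (e k)) (e.sum_repr W)
  simp only [map_sum, map_smul, LinearMap.sum_apply, LinearMap.smul_apply, hg, smul_eq_mul,
    mul_ite, mul_zero, Finset.sum_ite_eq', Finset.mem_univ, if_true] at h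
  rw [← h, mul_comm]

theorem ext_of_apply_basis_eq (hg : ∀ i j, g (e i) (e j) = if i = j then s i else 0)
    (hs : ∀ i, s i ≠ 0) {W W' : M} (h : ∀ k, g W (e k) = g W' (e k)) : W = W' :=
  e.ext_elem fun k => by
    simpa [apply_basis_eq_mul_repr e g hg, hs k] using h k

theorem eq_of_koszul [NeZero (2 : K)] (hg : ∀ i j, g (e i) (e j) = if i = j then s i else 0)
    (hs : ∀ i, s i ≠ 0) {lie nabla : M →ₗ[K] M →ₗ[K] M}
    (hK : ∀ X Y Z, 2 * g (nabla X Y) Z = g (lie X Y) Z - g (lie Y Z) X + g (lie Z X) Y)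
    {X Y W : M}
    (h : ∀ k, 2 * g W (e k) = g (lie X Y) (e k) - g (lie Y (e k)) X + g (lie (e k) X) Y) :
    nabla X Y = W :=
  ext_of_apply_basis_eq e g hg hs fun k =>
    mul_left_cancel₀ (two_ne_zero (α := K)) ((hK X Y (e k)).trans (h k).symm)

end PseudoOrthonormal

theorem eq_zero_of_forall_eq_neg {K M N : Type*} [Field K] [NeZero (2 : K)] [AddCommGroup N]
    [Module K N] {f : M → M → N} (hf : ∀ x y, f x y = -f y x) (x : M) : f x x = 0 := by
  have h : (2 : K) • f x x = 0 := by
    rw [two_smul]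
    nth_rewrite 1 [hf]
    exact neg_add_cancel _
  exact (smul_eq_zero.mp h).resolve_left two_ne_zero

def roughLaplacian {ι R M : Type*} [Fintype ι] [CommRing R] [AddCommGroup M] [Module R M]
    (e : ι → M) (eps : ι → R) (nabla : M →ₗ[R] M →ₗ[R] M) : M →ₗ[R] M :=
  ∑ i, eps i • ((nabla (e i)).comp (nabla (e i)) - nabla (nabla (e i) (e i)))

theorem roughLaplacian_apply {ι R M : Type*} [Fintype ι] [CommRing R] [AddCommGroup M]
    [Module R M] (e : ι → M) (eps : ι → R) (nabla : M →ₗ[R] M →ₗ[R] M) (V : M) :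
    roughLaplacian e eps nabla V =
      ∑ i, eps i • (nabla (e i) (nabla (e i) V) - nabla (nabla (e i) (e i)) V) := by
  simp [roughLaplacian]

section LorentzianExample

variable {G : Type*} [AddCommGroup G] [Module ℝ G]

noncomputable def bracketTable (e : Fin 4 → G) (A B a : ℝ) : Fin 4 → Fin 4 → G
  | 0, 1 => (a * A / B) • e 0
  | 1, 0 => -((a * A / B) • e 0)
  | 0, 2 => a • e 0
  | 2, 0 => -(a • e 0)
  | 1, 3 => B • e 1 - A • e 2
  | 3, 1 => -(B • e 1 - A • e 2)
  | 2, 3 => A • e 1 - (A ^ 2 / B) • e 2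
  | 3, 2 => -(A • e 1 - (A ^ 2 / B) • e 2)
  | _, _ => 0

noncomputable def leviCivitaTable (e : Fin 4 → G) (A B a : ℝ) : Fin 4 → Fin 4 → G
  | 0, 0 => -(a * A / B) • e 1 + a • e 2
  | 0, 1 => (a * A / B) • e 0
  | 0, 2 => a • e 0
  | 1, 1 => -B • e 3
  | 1, 2 => -A • e 3
  | 1, 3 => B • e 1 - A • e 2
  | 2, 1 => -A • e 3
  | 2, 2 => -(A ^ 2 / B) • e 3
  | 2, 3 => A • e 1 - (A ^ 2 / B) • e 2
  | _, _ => 0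

variable (e : Basis (Fin 4) ℝ G) {A B a : ℝ}

theorem lie_basis_eq_bracketTable {lie : G →ₗ[ℝ] G →ₗ[ℝ] G} (hanti : ∀ X Y, lie X Y = -lie Y X)
    (h01 : lie (e 0) (e 1) = (a * A / B) • e 0) (h02 : lie (e 0) (e 2) = a • e 0)
    (h03 : lie (e 0) (e 3) = 0) (h12 : lie (e 1) (e 2) = 0)
    (h13 : lie (e 1) (e 3) = B • e 1 - A • e 2)
    (h23 : lie (e 2) (e 3) = A • e 1 - (A ^ 2 / B) • e 2) (i j : Fin 4) :
    lie (e i) (e j) = bracketTable e A B a i j := by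
  have hself := eq_zero_of_forall_eq_neg (K := ℝ) hanti
  fin_cases i <;> fin_cases j <;>
    simp [bracketTable, hself, h01, h02, h03, h12, h13, h23, hanti (e 1) (e 0),
      hanti (e 2) (e 0), hanti (e 3) (e 0), hanti (e 2) (e 1), hanti (e 3) (e 1),
      hanti (e 3) (e 2)]

theorem nabla_basis_eq_leviCivitaTable {g : G →ₗ[ℝ] G →ₗ[ℝ] ℝ} {lie nabla : G →ₗ[ℝ] G →ₗ[ℝ] G}
    (hB : B ≠ 0) (hlie : ∀ i j, lie (e i) (e j) = bracketTable e A B a i j)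
    (hg : ∀ i j : Fin 4, g (e i) (e j) = if i = j then (if i = 2 then (-1 : ℝ) else 1) else 0)
    (hK : ∀ X Y Z, 2 * g (nabla X Y) Z = g (lie X Y) Z - g (lie Y Z) X + g (lie Z X) Y)
    (i j : Fin 4) : nabla (e i) (e j) = leviCivitaTable e A B a i j := by
  refine eq_of_koszul e g hg (fun i => by split_ifs <;> norm_num) hK fun k => ?_
  simp only [hlie]
  fin_cases i <;> fin_cases j <;> fin_cases k <;>
    simp [bracketTable, leviCivitaTable, hg] <;> field_simp <;> ring

theorem roughLaplacian_eq_smul_id {nabla : G →ₗ[ℝ] G →ₗ[ℝ] G} (hB : B ≠ 0)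
    (ha : a ^ 2 = A ^ 2 - B ^ 2)
    (hnabla : ∀ i j, nabla (e i) (e j) = leviCivitaTable e A B a i j) :
    roughLaplacian e (fun i => if i = 2 then -1 else 1) nabla =
      (-((A ^ 2 - B ^ 2) ^ 2 / B ^ 2)) • LinearMap.id := by
  refine e.ext fun j => ?_
  rw [roughLaplacian_apply]
  fin_cases j <;> simp [Fin.sum_univ_four, hnabla, leviCivitaTable] <;> match_scalars <;>
    field_simp <;> (try rw [ha]) <;> ring

end LorentzianExample

theorem stmt_2_general {G : Type*} [AddCommGroup G] [Module ℝ G]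
    (e : Module.Basis (Fin 4) ℝ G)
    (lie : G →ₗ[ℝ] G →ₗ[ℝ] G)
    (g : G →ₗ[ℝ] G →ₗ[ℝ] ℝ)
    (nabla : G →ₗ[ℝ] G →ₗ[ℝ] G)
    (A B ε : ℝ) (hB : B ≠ 0) (hAB : B ^ 2 ≤ A ^ 2) (hε : ε = 1 ∨ ε = -1)
    (hanti : ∀ X Y : G, lie X Y = - lie Y X)
    (h12 : lie (e 0) (e 1) = (ε * A * Real.sqrt (A ^ 2 - B ^ 2) / B) • e 0)
    (h13 : lie (e 0) (e 2) = (ε * Real.sqrt (A ^ 2 - B ^ 2)) • e 0)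
    (h14 : lie (e 0) (e 3) = 0)
    (h23 : lie (e 1) (e 2) = 0)
    (h24 : lie (e 1) (e 3) = B • e 1 - A • e 2)
    (h34 : lie (e 2) (e 3) = A • e 1 - (A ^ 2 / B) • e 2)
    (hg : ∀ i j : Fin 4, g (e i) (e j) = if i = j then (if i = 2 then (-1 : ℝ) else 1) else 0)
    (hK : ∀ X Y Z : G, 2 * g (nabla X Y) Z = g (lie X Y) Z - g (lie Y Z) X + g (lie Z X) Y) :
    (let eps : Fin 4 → ℝ := fun i => if i = (2 : Fin 4) then (-1 : ℝ) else 1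
     let lap : G → G := fun V : G => ∑ i : Fin 4, eps i • (nabla (e i) (nabla (e i) V) - nabla (nabla (e i) (e i)) V)
     ∀ V : G, lap V = (-((A ^ 2 - B ^ 2) ^ 2 / B ^ 2)) • V ∧
       ∃ lam : ℝ, lap V = lam • V) := by
  intro eps lap V
  set a := ε * Real.sqrt (A ^ 2 - B ^ 2) with ha_def
  have ha : a ^ 2 = A ^ 2 - B ^ 2 := by
    rw [ha_def, mul_pow, Real.sq_sqrt (sub_nonneg.mpr hAB)]
    rcases hε with rfl | rfl <;> ring
  have h01 : lie (e 0) (e 1) = (a * A / B) • e 0 := by rw [h12, ha_def]; ring_nf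
  have hnabla := nabla_basis_eq_leviCivitaTable e hB
    (lie_basis_eq_bracketTable e hanti h01 h13 h14 h23 h24 h34) hg hK
  have hlap : lap V = (-((A ^ 2 - B ^ 2) ^ 2 / B ^ 2)) • V := by
    have := LinearMap.congr_fun (roughLaplacian_eq_smul_id e hB ha hnabla) V
    rwa [roughLaplacian_apply] at this
  exact ⟨hlap, _, hlap⟩

theorem stmt_2 {G : Type*} [AddCommGroup G] [Module ℝ G]
    (e : Module.Basis (Fin 4) ℝ G)
    (lie : G →ₗ[ℝ] G →ₗ[ℝ] G)
    (g : G →ₗ[ℝ] G →ₗ[ℝ] ℝ)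
    (nabla : G →ₗ[ℝ] G →ₗ[ℝ] G)
    (A B ε : ℝ) (hB : B ≠ 0) (hAB : B ^ 2 ≤ A ^ 2) (hε : ε = 1 ∨ ε = -1)
    (hanti : ∀ X Y : G, lie X Y = - lie Y X)
    (h12 : lie (e 0) (e 1) = (ε * A * Real.sqrt (A ^ 2 - B ^ 2) / B) • e 0)
    (h13 : lie (e 0) (e 2) = (ε * Real.sqrt (A ^ 2 - B ^ 2)) • e 0)
    (h14 : lie (e 0) (e 3) = 0)
    (h23 : lie (e 1) (e 2) = 0)
    (h24 : lie (e 1) (e 3) = B • e 1 - A • e 2)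
    (h34 : lie (e 2) (e 3) = A • e 1 - (A ^ 2 / B) • e 2)
    (hg : ∀ i j : Fin 4, g (e i) (e j) = if i = j then (if i = 2 then (-1 : ℝ) else 1) else 0)
    (hgsymm : ∀ X Y : G, g X Y = g Y X)
    (hK : ∀ X Y Z : G, 2 * g (nabla X Y) Z = g (lie X Y) Z - g (lie Y Z) X + g (lie Z X) Y) :
    (let eps : Fin 4 → ℝ := fun i => if i = (2 : Fin 4) then (-1 : ℝ) else 1
     let lap : G → G := fun V : G => ∑ i : Fin 4, eps i • (nabla (e i) (nabla (e i) V) - nabla (nabla (e i) (e i)) V)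
     ∀ V : G, lap V = (-((A ^ 2 - B ^ 2) ^ 2 / B ^ 2)) • V ∧
       ∃ lam : ℝ, lap V = lam • V) :=
  stmt_2_general e lie g nabla A B ε hB hAB hε hanti h12 h13 h14 h23 h24 h34 hg hK
end

section
/- Suppose ε = −1, δ = 1 and A² ≥ B², and let V = c(e₂ + e₃ − e₄) with c ≠ 0. Then V defines a harmonic map (i.e., ∇*∇V = 0 and Σ_{i=1}^{4} εᵢ R(∇_{eᵢ}V, V)eᵢ = 0) if and only if A = −B. -/
/-!
The Koszul formula, read against the orthonormal basis, determines all Christoffel symbols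
`∇_{e_i} e_j` as explicit combinations of the basis. Substituting them, both the rough Laplacian
of `V = c (e₂ + e₃ - e₄)` and the trace `Σ εᵢ R(∇_{eᵢ}V, V) eᵢ` turn out to be multiples of `V`,
namely `-(3c/4)(A + B)² V` and `(3c²/8)(A + B)³ V`, and these vanish exactly when `A + B = 0`.
-/


open Module

theorem Module.Basis.bilin_apply_basis_of_diagonal {ι R M : Type*} [Fintype ι] [DecidableEq ι]
    [CommRing R] [AddCommGroup M] [Module R M] (b : Basis ι R M) (g : M →ₗ[R] M →ₗ[R] R)
    (σ : ι → R) (hg : ∀ i j, g (b i) (b j) = if i = j then σ i else 0) (X : M) (k : ι) :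
    g X (b k) = b.repr X k * σ k := by
  conv_lhs => rw [← b.sum_repr X]
  simp [hg, -Basis.sum_repr]

theorem Module.Basis.eq_of_bilin_apply_eq_of_diagonal {ι R M : Type*} [Fintype ι] [DecidableEq ι]
    [CommRing R] [IsDomain R] [AddCommGroup M] [Module R M] (b : Basis ι R M)
    (g : M →ₗ[R] M →ₗ[R] R) (σ : ι → R) (hσ : ∀ i, σ i ≠ 0)
    (hg : ∀ i j, g (b i) (b j) = if i = j then σ i else 0) {X Y : M}
    (h : ∀ k, g X (b k) = g Y (b k)) : X = Y := by
  refine b.ext_elem fun k => mul_right_cancel₀ (hσ k) ?_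
  simpa only [b.bilin_apply_basis_of_diagonal g σ hg] using h k

noncomputable section

namespace LorentzianHarmonic

variable {G : Type*} [AddCommGroup G] [Module ℝ G]

def signature (i : Fin 4) : ℝ := if i = 2 then -1 else 1

theorem signature_ne_zero (i : Fin 4) : signature i ≠ 0 := by
  unfold signature; split_ifs <;> norm_num

-- The paper's e₁, …, e₄ are `e 0`, …, `e 3`; the tables are for ε = -1, δ = 1, with `s` in place
-- of √(A² - B²).
def bracketTable (e : Basis (Fin 4) ℝ G) (A B s : ℝ) : Fin 4 → Fin 4 → G :=
  ![![0, (-s / 2) • e 0, (s / 2) • e 0, ((A + B) / 2) • e 0],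
    ![-((-s / 2) • e 0), 0, 0, B • (e 1 + e 2)],
    ![-((s / 2) • e 0), 0, 0, A • (e 1 + e 2)],
    ![-(((A + B) / 2) • e 0), -(B • (e 1 + e 2)), -(A • (e 1 + e 2)), 0]]

def christoffel (e : Basis (Fin 4) ℝ G) (A B s : ℝ) : Fin 4 → Fin 4 → G :=
  ![![(s / 2) • (e 1 + e 2) - ((A + B) / 2) • e 3, (-s / 2) • e 0, (s / 2) • e 0,
      ((A + B) / 2) • e 0],
    ![0, (-B) • e 3, ((B - A) / 2) • e 3, B • e 1 + ((B - A) / 2) • e 2],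
    ![0, ((B - A) / 2) • e 3, A • e 3, ((A - B) / 2) • e 1 + A • e 2],
    ![0, (-(A + B) / 2) • e 2, (-(A + B) / 2) • e 1, 0]]

theorem lie_basis (e : Basis (Fin 4) ℝ G) (lie : G →ₗ[ℝ] G →ₗ[ℝ] G) {A B s : ℝ}
    (hanti : ∀ X Y : G, lie X Y = - lie Y X)
    (h01 : lie (e 0) (e 1) = (-s / 2) • e 0) (h02 : lie (e 0) (e 2) = (s / 2) • e 0)
    (h03 : lie (e 0) (e 3) = ((A + B) / 2) • e 0) (h12 : lie (e 1) (e 2) = 0)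
    (h13 : lie (e 1) (e 3) = B • (e 1 + e 2)) (h23 : lie (e 2) (e 3) = A • (e 1 + e 2))
    (i j : Fin 4) : lie (e i) (e j) = bracketTable e A B s i j := by
  have := IsAddTorsionFree.of_isTorsionFree ℝ G
  have hself : ∀ X, lie X X = 0 := fun X => self_eq_neg.mp (hanti X X)
  fin_cases i <;> fin_cases j <;>
    simp [bracketTable, hself, h01, h02, h03, h12, h13, h23, hanti (e 1) (e 0), hanti (e 2) (e 0),
      hanti (e 3) (e 0), hanti (e 2) (e 1), hanti (e 3) (e 1), hanti (e 3) (e 2)]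

theorem nabla_basis (e : Basis (Fin 4) ℝ G) (lie nabla : G →ₗ[ℝ] G →ₗ[ℝ] G)
    (g : G →ₗ[ℝ] G →ₗ[ℝ] ℝ) {A B s : ℝ}
    (hL : ∀ i j, lie (e i) (e j) = bracketTable e A B s i j)
    (hg : ∀ i j : Fin 4, g (e i) (e j) = if i = j then signature i else 0)
    (hK : ∀ X Y Z : G, 2 * g (nabla X Y) Z = g (lie X Y) Z - g (lie Y Z) X + g (lie Z X) Y)
    (i j : Fin 4) : nabla (e i) (e j) = christoffel e A B s i j := by
  refine e.eq_of_bilin_apply_eq_of_diagonal g signature signature_ne_zero hg fun k =>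
    mul_left_cancel₀ (two_ne_zero (α := ℝ)) ?_
  rw [hK, hL, hL, hL]
  fin_cases i <;> fin_cases j <;> fin_cases k <;>
    simp [bracketTable, christoffel, hg, signature] <;> ring

def curvature (lie nabla : G →ₗ[ℝ] G →ₗ[ℝ] G) (X Y Z : G) : G :=
  nabla (lie X Y) Z - nabla X (nabla Y Z) + nabla Y (nabla X Z)

def roughLaplacian (e : Basis (Fin 4) ℝ G) (nabla : G →ₗ[ℝ] G →ₗ[ℝ] G) (V : G) : G :=
  ∑ i, signature i • (nabla (e i) (nabla (e i) V) - nabla (nabla (e i) (e i)) V)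

def curvatureTrace (e : Basis (Fin 4) ℝ G) (lie nabla : G →ₗ[ℝ] G →ₗ[ℝ] G) (V : G) : G :=
  ∑ i, signature i • curvature lie nabla (nabla (e i) V) V (e i)

theorem roughLaplacian_eq (e : Basis (Fin 4) ℝ G) (nabla : G →ₗ[ℝ] G →ₗ[ℝ] G) {A B s : ℝ}
    (hΓ : ∀ i j, nabla (e i) (e j) = christoffel e A B s i j) (c : ℝ) :
    roughLaplacian e nabla (c • (e 1 + e 2 - e 3)) =
      (-(3 * c / 4) * (A + B) ^ 2) • (e 1 + e 2 - e 3) := by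
  simp only [roughLaplacian, Fin.sum_univ_four, signature, Fin.reduceEq, ↓reduceIte,
    map_add, map_sub, map_smul, map_zero, LinearMap.add_apply, LinearMap.sub_apply,
    LinearMap.smul_apply, LinearMap.zero_apply, hΓ, christoffel, Matrix.cons_val]
  module

theorem curvatureTrace_eq (e : Basis (Fin 4) ℝ G) (lie nabla : G →ₗ[ℝ] G →ₗ[ℝ] G) {A B s : ℝ}
    (hL : ∀ i j, lie (e i) (e j) = bracketTable e A B s i j)
    (hΓ : ∀ i j, nabla (e i) (e j) = christoffel e A B s i j) (c : ℝ) :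
    curvatureTrace e lie nabla (c • (e 1 + e 2 - e 3)) =
      (3 * c ^ 2 / 8 * (A + B) ^ 3) • (e 1 + e 2 - e 3) := by
  simp only [curvatureTrace, curvature, Fin.sum_univ_four, signature, Fin.reduceEq, ↓reduceIte,
    map_add, map_sub, map_smul, map_neg, map_zero, LinearMap.add_apply, LinearMap.sub_apply,
    LinearMap.smul_apply, LinearMap.neg_apply, LinearMap.zero_apply, hL, hΓ, bracketTable,
    christoffel, Matrix.cons_val]
  module

end LorentzianHarmonic

end

open LorentzianHarmonic in
theorem stmt_4_general {G : Type*} [AddCommGroup G] [Module ℝ G]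
    (e : Module.Basis (Fin 4) ℝ G)
    (lie : G →ₗ[ℝ] G →ₗ[ℝ] G)
    (g : G →ₗ[ℝ] G →ₗ[ℝ] ℝ)
    (nabla : G →ₗ[ℝ] G →ₗ[ℝ] G)
    (A B ε δ c : ℝ) (hε : ε = -1) (hδ : δ = 1)
    (hc : c ≠ 0)
    (hanti : ∀ X Y : G, lie X Y = - lie Y X)
    (h12 : lie (e 0) (e 1) = (ε * Real.sqrt (A ^ 2 - B ^ 2) / 2) • e 0)
    (h13 : lie (e 0) (e 2) = (-(ε * δ * Real.sqrt (A ^ 2 - B ^ 2)) / 2) • e 0)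
    (h14 : lie (e 0) (e 3) = ((δ * A + B) / 2) • e 0)
    (h23 : lie (e 1) (e 2) = 0)
    (h24 : lie (e 1) (e 3) = B • (e 1 + δ • e 2))
    (h34 : lie (e 2) (e 3) = A • (e 1 + δ • e 2))
    (hg : ∀ i j : Fin 4, g (e i) (e j) = if i = j then (if i = 2 then (-1 : ℝ) else 1) else 0)
    (hK : ∀ X Y Z : G, 2 * g (nabla X Y) Z = g (lie X Y) Z - g (lie Y Z) X + g (lie Z X) Y) :
    (let eps : Fin 4 → ℝ := fun i => if i = (2 : Fin 4) then (-1 : ℝ) else 1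
     let lap : G → G := fun V : G => ∑ i : Fin 4, eps i • (nabla (e i) (nabla (e i) V) - nabla (nabla (e i) (e i)) V)
     let tr : G → G := fun V : G => ∑ i : Fin 4, eps i • (nabla (lie (nabla (e i) V) V) (e i) - nabla (nabla (e i) V) (nabla V (e i)) + nabla V (nabla (nabla (e i) V) (e i)))
     let V : G := c • (e 1 + e 2 - e 3)
     (lap V = 0 ∧ tr V = 0) ↔ A = -B) := by
  subst hε hδ
  have hL := lie_basis e lie hanti (s := √(A ^ 2 - B ^ 2)) (by simpa using h12)
    (by simpa using h13) (by simpa using h14) h23 (by simpa using h24) (by simpa using h34)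
  have hΓ := nabla_basis e lie nabla g hL hg hK
  have hw : e 1 + e 2 - e 3 ≠ 0 := fun h => by simpa using congrArg (fun v => e.repr v 1) h
  show (roughLaplacian e nabla (c • (e 1 + e 2 - e 3)) = 0 ∧
      curvatureTrace e lie nabla (c • (e 1 + e 2 - e 3)) = 0) ↔ A = -B
  rw [roughLaplacian_eq e nabla hΓ, curvatureTrace_eq e lie nabla hL hΓ,
    smul_eq_zero_iff_left hw, smul_eq_zero_iff_left hw]
  constructor
  · rintro ⟨h, -⟩
    linarith [show A + B = 0 by simpa [hc] using h]
  · rintro rfl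
    constructor <;> ring

theorem stmt_4 {G : Type*} [AddCommGroup G] [Module ℝ G]
    (e : Module.Basis (Fin 4) ℝ G)
    (lie : G →ₗ[ℝ] G →ₗ[ℝ] G)
    (g : G →ₗ[ℝ] G →ₗ[ℝ] ℝ)
    (nabla : G →ₗ[ℝ] G →ₗ[ℝ] G)
    (A B ε δ c : ℝ) (hAB : B ^ 2 ≤ A ^ 2) (hε : ε = -1) (hδ : δ = 1)
    (hc : c ≠ 0)
    (hanti : ∀ X Y : G, lie X Y = - lie Y X)
    (h12 : lie (e 0) (e 1) = (ε * Real.sqrt (A ^ 2 - B ^ 2) / 2) • e 0)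
    (h13 : lie (e 0) (e 2) = (-(ε * δ * Real.sqrt (A ^ 2 - B ^ 2)) / 2) • e 0)
    (h14 : lie (e 0) (e 3) = ((δ * A + B) / 2) • e 0)
    (h23 : lie (e 1) (e 2) = 0)
    (h24 : lie (e 1) (e 3) = B • (e 1 + δ • e 2))
    (h34 : lie (e 2) (e 3) = A • (e 1 + δ • e 2))
    (hg : ∀ i j : Fin 4, g (e i) (e j) = if i = j then (if i = 2 then (-1 : ℝ) else 1) else 0)
    (hgsymm : ∀ X Y : G, g X Y = g Y X)
    (hK : ∀ X Y Z : G, 2 * g (nabla X Y) Z = g (lie X Y) Z - g (lie Y Z) X + g (lie Z X) Y) :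
    (let eps : Fin 4 → ℝ := fun i => if i = (2 : Fin 4) then (-1 : ℝ) else 1
     let lap : G → G := fun V : G => ∑ i : Fin 4, eps i • (nabla (e i) (nabla (e i) V) - nabla (nabla (e i) (e i)) V)
     let tr : G → G := fun V : G => ∑ i : Fin 4, eps i • (nabla (lie (nabla (e i) V) V) (e i) - nabla (nabla (e i) V) (nabla V (e i)) + nabla V (nabla (nabla (e i) V) (e i)))
     let V : G := c • (e 1 + e 2 - e 3)
     (lap V = 0 ∧ tr V = 0) ↔ A = -B) :=
  stmt_4_general e lie g nabla A B ε δ c hε hδ hc hanti h12 h13 h14 h23 h24 h34 hg hK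
end

section
/- The light-like vector u = e₃ − e₄ (= −u₃) is parallel: ∇_X u = 0 for every X ∈ 𝔤, and ⟨u,u⟩ = 0. -/
/-!
The vector `w = e₃ - e₄` is `-u₃` (`u₃` is `u 2`, indices being 0-based), and `u₃` is central
in `𝔤` and orthogonal to the derived algebra `[𝔤, 𝔤] ⊆ span {u₁, u₂, u₃}`. For such a vector all
three terms of the Koszul formula for `2⟨∇_X u₃, Z⟩` vanish, so `∇_X u₃ = 0` because the metric
is nondegenerate (its Gram matrix in the basis `u` has determinant `-1`). Finally `⟨u₃, u₃⟩ = 0`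
is read off the Gram matrix.
-/

open Module

section

variable {G : Type*} [AddCommGroup G] [Module ℝ G]

theorem levi_civita_apply_eq_zero_of_central_of_orthogonal {lie : G →ₗ[ℝ] G →ₗ[ℝ] G}
    {g : G →ₗ[ℝ] G →ₗ[ℝ] ℝ} {nabla : G →ₗ[ℝ] G →ₗ[ℝ] G} (hg : g.SeparatingLeft)
    (hanti : ∀ X Y, lie X Y = -lie Y X)
    (hK : ∀ X Y Z, 2 * g (nabla X Y) Z = g (lie X Y) Z - g (lie Y Z) X + g (lie Z X) Y)
    {z : G} (hcentral : ∀ X, lie X z = 0) (horth : ∀ X Y, g (lie X Y) z = 0) (X : G) :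
    nabla X z = 0 := by
  refine hg _ fun Z => ?_
  have h := hK X z Z
  rw [hcentral, hanti, hcentral, horth] at h
  simpa using h

theorem separatingLeft_of_gram_eq (u : Basis (Fin 4) ℝ G) (g : G →ₗ[ℝ] G →ₗ[ℝ] ℝ)
    (hg : ∀ i j : Fin 4, g (u i) (u j) =
      if (i = 0 ∧ j = 0) ∨ (i = 1 ∧ j = 1) ∨ (i = 2 ∧ j = 3) ∨ (i = 3 ∧ j = 2) then (1 : ℝ) else 0) :
    g.SeparatingLeft := by
  have hgram : LinearMap.toMatrix₂ u u g = !![1, 0, 0, 0; 0, 1, 0, 0; 0, 0, 0, 1; 0, 0, 1, 0] := by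
    ext i j
    fin_cases i <;> fin_cases j <;> simp [LinearMap.toMatrix₂_apply, hg]
  refine LinearMap.separatingLeft_of_det_ne_zero u ?_
  rw [hgram]
  simp [Matrix.det_succ_row_zero, Fin.sum_univ_succ]

end

theorem stmt_15_general {G : Type*} [AddCommGroup G] [Module ℝ G]
    (u : Module.Basis (Fin 4) ℝ G)
    (lie : G →ₗ[ℝ] G →ₗ[ℝ] G)
    (g : G →ₗ[ℝ] G →ₗ[ℝ] ℝ)
    (nabla : G →ₗ[ℝ] G →ₗ[ℝ] G)
    (A B C D E ε : ℝ)
    (hanti : ∀ X Y : G, lie X Y = - lie Y X)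
    (h12 : lie (u 0) (u 1) = (ε * Real.sqrt ((A + D) ^ 2 + 4 * B ^ 2)) • u 2)
    (h13 : lie (u 0) (u 2) = 0)
    (h14 : lie (u 0) (u 3) = (-B) • u 0 + D • u 1 + E • u 2)
    (h23 : lie (u 1) (u 2) = 0)
    (h24 : lie (u 1) (u 3) = A • u 0 + B • u 1 + C • u 2)
    (h34 : lie (u 2) (u 3) = 0)
    (hg : ∀ i j : Fin 4, g (u i) (u j) =
      if (i = 0 ∧ j = 0) ∨ (i = 1 ∧ j = 1) ∨ (i = 2 ∧ j = 3) ∨ (i = 3 ∧ j = 2) then (1 : ℝ) else 0)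
    (hK : ∀ X Y Z : G, 2 * g (nabla X Y) Z = g (lie X Y) Z - g (lie Y Z) X + g (lie Z X) Y) :
    (let ef : Fin 4 → G := ![u 0, u 1, (-(1/2 : ℝ)) • u 2 + u 3, ((1/2 : ℝ)) • u 2 + u 3]
     let w : G := ef 2 - ef 3
     w = -(u 2) ∧ (∀ X : G, nabla X w = 0) ∧ g w w = 0) := by
  intro ef w
  have hw : w = -u 2 := by
    simp only [w, ef, Matrix.cons_val]
    module
  have := IsAddTorsionFree.of_isTorsionFree ℝ G
  have hself : ∀ X, lie X X = 0 := fun X => self_eq_neg.mp (hanti X X)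
  have hcentral : ∀ X, lie X (u 2) = 0 := by
    suffices lie.flip (u 2) = 0 from fun X => LinearMap.congr_fun this X
    refine u.ext fun i => ?_
    fin_cases i
    exacts [h13, h23, hself _, by simp [hanti (u 3), h34]]
  have horth : ∀ X Y, g (lie X Y) (u 2) = 0 := by
    suffices lie.compr₂ (g.flip (u 2)) = 0 from fun X Y => LinearMap.congr_fun₂ this X Y
    refine LinearMap.ext_basis u u fun i j => ?_
    fin_cases i <;> fin_cases j <;>
      simp [hself, hcentral, hanti (u 2), hanti (u 1) (u 0), hanti (u 3), h12, h14, h24, hg]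
  have hpar := levi_civita_apply_eq_zero_of_central_of_orthogonal
    (separatingLeft_of_gram_eq u g hg) hanti hK hcentral horth
  refine ⟨hw, fun X => ?_, ?_⟩
  · rw [hw, map_neg, hpar, neg_zero]
  · simpa [hw] using hg 2 2

theorem stmt_15 {G : Type*} [AddCommGroup G] [Module ℝ G]
    (u : Module.Basis (Fin 4) ℝ G)
    (lie : G →ₗ[ℝ] G →ₗ[ℝ] G)
    (g : G →ₗ[ℝ] G →ₗ[ℝ] ℝ)
    (nabla : G →ₗ[ℝ] G →ₗ[ℝ] G)
    (A B C D E ε : ℝ) (hε : ε = 1 ∨ ε = -1)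
    (hanti : ∀ X Y : G, lie X Y = - lie Y X)
    (h12 : lie (u 0) (u 1) = (ε * Real.sqrt ((A + D) ^ 2 + 4 * B ^ 2)) • u 2)
    (h13 : lie (u 0) (u 2) = 0)
    (h14 : lie (u 0) (u 3) = (-B) • u 0 + D • u 1 + E • u 2)
    (h23 : lie (u 1) (u 2) = 0)
    (h24 : lie (u 1) (u 3) = A • u 0 + B • u 1 + C • u 2)
    (h34 : lie (u 2) (u 3) = 0)
    (hg : ∀ i j : Fin 4, g (u i) (u j) =
      if (i = 0 ∧ j = 0) ∨ (i = 1 ∧ j = 1) ∨ (i = 2 ∧ j = 3) ∨ (i = 3 ∧ j = 2) then (1 : ℝ) else 0)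
    (hgsymm : ∀ X Y : G, g X Y = g Y X)
    (hK : ∀ X Y Z : G, 2 * g (nabla X Y) Z = g (lie X Y) Z - g (lie Y Z) X + g (lie Z X) Y) :
    (let ef : Fin 4 → G := ![u 0, u 1, (-(1/2 : ℝ)) • u 2 + u 3, ((1/2 : ℝ)) • u 2 + u 3]
     let w : G := ef 2 - ef 3
     w = -(u 2) ∧ (∀ X : G, nabla X w = 0) ∧ g w w = 0) :=
  stmt_15_general u lie g nabla A B C D E ε hanti h12 h13 h14 h23 h24 h34 hg hK
end
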